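/- arXiv:1904.08576 — 3 statements merged into one kernel-verified Lean document; each statement's English description precedes it below -/
import Mathlib

section
/- Let $Z$ be a non-negative random variable with $\psi_p$-Orlicz norm equal to $\nu$ for some $p \ge 1$, and let $c > 0$. Then $\mathbb{E}[Z^2 \cdot \mathbb{1}(Z \ge c)] \le (2c^2 + 4c\nu + 4\nu^2) \exp(-c^p/\nu^p)$. -/
open MeasureTheory ProbabilityTheory Real

/-- The `ψ_p`-Orlicz norm of a random variable `Z`:
`inf {t > 0 : E[exp((|Z|/t)^p)] ≤ 2}` (equivalently `E[exp((|Z|/t)^p) - 1] ≤ 1`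
for a probability measure). -/
noncomputable def orliczNorm (p : ℝ) {Ω : Type*} [MeasurableSpace Ω] (μ : Measure Ω)
    (Z : Ω → ℝ) : ℝ :=
  sInf {t : ℝ | 0 < t ∧ ∫ ω, Real.exp ((|Z ω| / t) ^ p) ∂μ ≤ 2}

/-! For every `t > ν` the pointwise bound `z² 1(z ≥ c) ≤ K_t e^{-(c/t)^p} e^{(|z|/t)^p}` with
`K_t = c² + 2ct + 2t²` integrates, since `E e^{(|Z|/t)^p} ≤ 2`, to the claimed bound at `t`;
letting `t ↓ ν` gives the theorem. The pointwise bound writes `z = c + t x` and combines the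
superadditivity `(c/t)^p + x^p ≤ (z/t)^p` of `p`-th powers with `(c + t x)² ≤ K_t e^{x^p}`. -/

lemma sq_add_mul_le_mul_exp_rpow {c t x p : ℝ} (hc : 0 ≤ c) (ht : 0 ≤ t) (hx : 0 ≤ x)
    (hp : 1 ≤ p) : (c + t * x) ^ 2 ≤ (c ^ 2 + 2 * c * t + 2 * t ^ 2) * exp (x ^ p) := by
  rcases le_total x 1 with hx1 | hx1
  · have hexp : 1 ≤ exp (x ^ p) := one_le_exp (by positivity)
    have htx : t * x ≤ t := mul_le_of_le_one_right ht hx1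
    have hsq : (c + t * x) ^ 2 ≤ c ^ 2 + 2 * c * t + 2 * t ^ 2 := by
      nlinarith [mul_nonneg ht hx]
    nlinarith [mul_le_mul_of_nonneg_left hexp (by positivity : 0 ≤ c ^ 2 + 2 * c * t + 2 * t ^ 2)]
  · have hexp : 1 + x + x ^ 2 / 2 ≤ exp (x ^ p) :=
      (quadratic_le_exp_of_nonneg hx).trans (exp_le_exp.2 (self_le_rpow_of_one_le hx1 hp))
    nlinarith [mul_le_mul_of_nonneg_left hexp (by positivity : 0 ≤ c ^ 2 + 2 * c * t + 2 * t ^ 2),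
      mul_nonneg hc ht, mul_nonneg (mul_nonneg hc ht) hx]

lemma sq_mul_ite_le_mul_exp_rpow {c t z p : ℝ} (hc : 0 ≤ c) (ht : 0 < t) (hp : 1 ≤ p) :
    z ^ 2 * (if c ≤ z then (1 : ℝ) else 0) ≤
      (c ^ 2 + 2 * c * t + 2 * t ^ 2) * exp (-(c / t) ^ p) * exp ((|z| / t) ^ p) := by
  split_ifs with hcz
  · have hz : |z| = z := abs_of_nonneg (hc.trans hcz)
    have hx : 0 ≤ (z - c) / t := div_nonneg (sub_nonneg.2 hcz) ht.le
    have hsuper : (c / t) ^ p + ((z - c) / t) ^ p ≤ (z / t) ^ p := by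
      simpa [← add_div] using add_rpow_le_rpow_add (div_nonneg hc ht.le) hx hp
    calc z ^ 2 * 1 = (c + t * ((z - c) / t)) ^ 2 := by field_simp; ring
      _ ≤ (c ^ 2 + 2 * c * t + 2 * t ^ 2) * exp (((z - c) / t) ^ p) :=
        sq_add_mul_le_mul_exp_rpow hc ht.le hx hp
      _ ≤ (c ^ 2 + 2 * c * t + 2 * t ^ 2) * exp (-(c / t) ^ p + (z / t) ^ p) := by
        gcongr; linarith
      _ = _ := by rw [hz, exp_add, ← mul_assoc]
  · rw [mul_zero]
    positivity

lemma exp_rpow_div_le_exp_rpow_div {s t p : ℝ} (hs : 0 < s) (hst : s ≤ t) (hp : 0 ≤ p) (z : ℝ) :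
    exp ((|z| / t) ^ p) ≤ exp ((|z| / s) ^ p) := by
  gcongr
  exact div_nonneg (abs_nonneg z) (hs.trans_le hst).le

section Orlicz

variable {Ω : Type*} [MeasurableSpace Ω] {μ : Measure Ω} {Z : Ω → ℝ} {p s t : ℝ}

lemma aemeasurable_abs_of_integrable_exp_rpow (hs : 0 < s) (hp : p ≠ 0)
    (hint : Integrable (fun ω ↦ exp ((|Z ω| / s) ^ p)) μ) :
    AEMeasurable (fun ω ↦ |Z ω|) μ := by
  have hinv : (fun ω ↦ |Z ω|) = (fun y ↦ s * log y ^ p⁻¹) ∘ (fun ω ↦ exp ((|Z ω| / s) ^ p)) := by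
    funext ω
    simp only [Function.comp_apply, log_exp,
      rpow_rpow_inv (div_nonneg (abs_nonneg (Z ω)) hs.le) hp]
    field_simp
  rw [hinv]
  exact (measurable_log.pow_const _).const_mul _ |>.comp_aemeasurable
    hint.aestronglyMeasurable.aemeasurable

lemma integrable_exp_rpow_div_of_le (hs : 0 < s) (hst : s ≤ t) (hp : 0 < p)
    (hint : Integrable (fun ω ↦ exp ((|Z ω| / s) ^ p)) μ) :
    Integrable (fun ω ↦ exp ((|Z ω| / t) ^ p)) μ := by
  have hZ := aemeasurable_abs_of_integrable_exp_rpow hs hp.ne' hint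
  refine hint.mono' ?_ (.of_forall fun ω ↦ ?_)
  · exact (measurable_exp.comp ((measurable_id.div_const t).pow_const p)).comp_aemeasurable hZ
      |>.aestronglyMeasurable
  · rw [norm_of_nonneg (exp_pos _).le]
    exact exp_rpow_div_le_exp_rpow_div hs hst hp.le (Z ω)

lemma two_lt_integral_exp_rpow_of_lt_orliczNorm (hs : 0 < s) (hsν : s < orliczNorm p μ Z) :
    2 < ∫ ω, exp ((|Z ω| / s) ^ p) ∂μ := by
  by_contra! h
  exact hsν.not_ge (csInf_le ⟨0, fun _ hx ↦ hx.1.le⟩ ⟨hs, h⟩)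

-- Membership in the defining set does not give integrability (`∫` is `0` otherwise), so it is
-- obtained from `t = ν / 2`, where the integral exceeds `2`.
lemma integrable_exp_rpow_of_orliczNorm_lt (hp : 0 < p) (hν : 0 < orliczNorm p μ Z)
    (ht : orliczNorm p μ Z / 2 ≤ t) :
    Integrable (fun ω ↦ exp ((|Z ω| / t) ^ p)) μ := by
  have hlt := two_lt_integral_exp_rpow_of_lt_orliczNorm (half_pos hν) (half_lt_self hν)
  refine integrable_exp_rpow_div_of_le (half_pos hν) ht hp ?_
  by_contra h
  rw [integral_undef h] at hlt
  norm_num at hlt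

lemma integral_exp_rpow_le_two_of_orliczNorm_lt (hp : 0 < p) (hν : 0 < orliczNorm p μ Z)
    (ht : orliczNorm p μ Z < t) :
    ∫ ω, exp ((|Z ω| / t) ^ p) ∂μ ≤ 2 := by
  have hne : {t : ℝ | 0 < t ∧ ∫ ω, exp ((|Z ω| / t) ^ p) ∂μ ≤ 2}.Nonempty := by
    by_contra h
    rw [Set.not_nonempty_iff_eq_empty] at h
    rw [orliczNorm, h, sInf_empty] at hν
    exact hν.false
  obtain ⟨s, ⟨hs, hs2⟩, hst⟩ := exists_lt_of_csInf_lt hne ht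
  have hνs : orliczNorm p μ Z ≤ s := csInf_le ⟨0, fun _ hx ↦ hx.1.le⟩ ⟨hs, hs2⟩
  refine (integral_mono (integrable_exp_rpow_of_orliczNorm_lt hp hν (by linarith))
    (integrable_exp_rpow_of_orliczNorm_lt hp hν (by linarith))
    (exp_rpow_div_le_exp_rpow_div hs hst.le hp.le <| Z ·)).trans hs2

lemma integral_sq_mul_ite_le_of_orliczNorm_lt {c : ℝ} (hc : 0 ≤ c) (hp : 1 ≤ p)
    (hν : 0 < orliczNorm p μ Z) (ht : orliczNorm p μ Z < t) :
    ∫ ω, Z ω ^ 2 * (if c ≤ Z ω then (1 : ℝ) else 0) ∂μ ≤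
      (2 * c ^ 2 + 4 * c * t + 4 * t ^ 2) * exp (-(c ^ p / t ^ p)) := by
  have hp0 : 0 < p := zero_lt_one.trans_le hp
  have ht0 : 0 < t := hν.trans ht
  set K := (c ^ 2 + 2 * c * t + 2 * t ^ 2) * exp (-(c / t) ^ p) with hK
  calc ∫ ω, Z ω ^ 2 * (if c ≤ Z ω then (1 : ℝ) else 0) ∂μ
      ≤ ∫ ω, K * exp ((|Z ω| / t) ^ p) ∂μ := by
        refine integral_mono_of_nonneg (.of_forall fun ω ↦ ?_)
          ((integrable_exp_rpow_of_orliczNorm_lt hp0 hν (by linarith)).const_mul K)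
          (.of_forall fun ω ↦ sq_mul_ite_le_mul_exp_rpow hc ht0 hp)
        simp only [Pi.zero_apply]
        split_ifs <;> positivity
    _ = K * ∫ ω, exp ((|Z ω| / t) ^ p) ∂μ := integral_const_mul _ _
    _ ≤ K * 2 := by
        gcongr
        exact integral_exp_rpow_le_two_of_orliczNorm_lt hp0 hν ht
    _ = (2 * c ^ 2 + 4 * c * t + 4 * t ^ 2) * exp (-(c ^ p / t ^ p)) := by
        rw [hK, div_rpow hc ht0.le]
        ring

end Orlicz

theorem stmt1_general {Ω : Type*} [MeasurableSpace Ω] (μ : Measure Ω)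
    (p : ℝ) (hp : 1 ≤ p) (Z : Ω → ℝ)
    (ν : ℝ) (hν : 0 < ν) (hnorm : orliczNorm p μ Z = ν) (c : ℝ) (hc : 0 < c) :
    ∫ ω, (Z ω) ^ 2 * (if c ≤ Z ω then (1 : ℝ) else 0) ∂μ ≤
      (2 * c ^ 2 + 4 * c * ν + 4 * ν ^ 2) * Real.exp (-(c ^ p / ν ^ p)) := by
  have hbound : ContinuousAt (fun t ↦ (2 * c ^ 2 + 4 * c * t + 4 * t ^ 2) *
      exp (-(c ^ p / t ^ p))) ν := by
    have hrpow := continuousAt_rpow_const ν p (Or.inl hν.ne')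
    have hrpow_ne := (rpow_pos_of_pos hν p).ne'
    fun_prop (disch := assumption)
  refine ge_of_tendsto (hbound.tendsto.mono_left (nhdsWithin_le_nhds (s := Set.Ioi ν))) ?_
  filter_upwards [self_mem_nhdsWithin] with t ht
  subst hnorm
  exact integral_sq_mul_ite_le_of_orliczNorm_lt hc.le hp hν ht

/-- If `Z ≥ 0` has `ψ_p`-Orlicz norm `ν` for some `p ≥ 1` and `c > 0`, then
`E[Z² ⋅ 1(Z ≥ c)] ≤ (2c² + 4cν + 4ν²) exp(-c^p/ν^p)`. -/
theorem stmt1 {Ω : Type*} [MeasurableSpace Ω] (μ : Measure Ω) [IsProbabilityMeasure μ]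
    (p : ℝ) (hp : 1 ≤ p) (Z : Ω → ℝ) (hZ : ∀ ω, 0 ≤ Z ω)
    (ν : ℝ) (hν : 0 < ν) (hnorm : orliczNorm p μ Z = ν) (c : ℝ) (hc : 0 < c) :
    ∫ ω, (Z ω) ^ 2 * (if c ≤ Z ω then (1 : ℝ) else 0) ∂μ ≤
      (2 * c ^ 2 + 4 * c * ν + 4 * ν ^ 2) * Real.exp (-(c ^ p / ν ^ p)) :=
  stmt1_general μ p hp Z ν hν hnorm c hc
end

section
/- Let $Z$ be a random variable with $\|Z\|_{\psi_p} = \nu$ for some $p \ge 1$ and $\mathbb{E}[Z^2] = \sigma^2 > 0$. Define $c_{\sigma,p} := \nu \cdot \max\{5, [10\log(2\nu^2/\sigma^2)]^{1/p}\}$. Then $\mathbb{E}[Z^2 \cdot \mathbb{1}(|Z| \le c_{\sigma,p})] \ge \frac{1}{2}\mathbb{E}[Z^2]$. -/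
open MeasureTheory ProbabilityTheory Real

lemma aux_rpow_diff {p b x : ℝ} (hp : 1 ≤ p) (hb : 1 ≤ b) (hbx : b ≤ x) :
    x - b ≤ x ^ p - b ^ p := by
  have hb0 : (0:ℝ) < b := lt_of_lt_of_le one_pos hb
  have hx0 : (0:ℝ) < x := lt_of_lt_of_le hb0 hbx
  have h1 : x / b ≤ (x / b) ^ p := by
    have : (x/b) ^ (1:ℝ) ≤ (x/b) ^ p :=
      Real.rpow_le_rpow_of_exponent_le ((one_le_div hb0).2 hbx) hp
    simpa using this
  have h3 : x ^ p = b ^ p * (x / b) ^ p := by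
    rw [← Real.mul_rpow hb0.le (by positivity)]
    congr 1; field_simp
  have h4 : (1:ℝ) ≤ b ^ (p - 1) := Real.one_le_rpow hb (by linarith)
  have h5 : b ^ p = b ^ (p-1) * b := by
    have h := Real.rpow_add hb0 (p-1) 1
    rw [Real.rpow_one] at h
    rw [show p - 1 + 1 = p by ring] at h
    exact h
  have h6 : b ^ p * (x/b) ≥ b ^ (p-1) * x := by
    rw [h5]; rw [mul_assoc]
    have : b * (x/b) = x := by field_simp
    rw [this]
  have h7 : x ^ p ≥ b ^ p * (x/b) := by
    rw [h3]
    have hbp : (0:ℝ) < b ^ p := Real.rpow_pos_of_pos hb0 p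
    exact mul_le_mul_of_nonneg_left h1 hbp.le
  nlinarith [h6, h7, h4]

lemma aux_decay {p b x : ℝ} (hp : 1 ≤ p) (hb : 4 ≤ b) (hbx : b ≤ x) :
    x ^ 2 ≤ b ^ 2 * Real.exp (-(b ^ p)) * Real.exp (x ^ p) := by
  have hb0 : (0:ℝ) < b := by linarith
  have hx0 : (0:ℝ) < x := by linarith
  have h3 : x - b ≤ x ^ p - b ^ p := aux_rpow_diff hp (by linarith) hbx
  have h4 : x / b ≤ Real.exp (x / b - 1) := by
    have := Real.add_one_le_exp (x/b - 1); linarith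
  have h5 : (x/b)^2 ≤ Real.exp (x/b - 1) ^ 2 := by
    have h0 : (0:ℝ) ≤ x / b := by positivity
    nlinarith [h4, Real.exp_pos (x/b - 1)]
  have h6 : Real.exp (x/b-1) ^ 2 = Real.exp (2*(x/b-1)) := by
    rw [sq, ← Real.exp_add]; ring_nf
  have h7 : 2*(x/b-1) ≤ x ^ p - b ^ p := by
    have h8 : 2*(x/b-1) = 2*(x-b)/b := by field_simp
    have h9 : 2*(x-b)/b ≤ (x-b)/2 := by
      rw [div_le_div_iff₀ hb0 (by norm_num)]
      nlinarith
    rw [h8]; linarith [h9, h3, show (x-b)/2 ≤ x - b by linarith]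
  have h10 : Real.exp (2*(x/b-1)) ≤ Real.exp (x ^ p - b ^ p) := Real.exp_le_exp.2 h7
  have h11 : (x/b)^2 ≤ Real.exp (x^p - b^p) := le_trans h5 (h6 ▸ h10)
  have h12 : Real.exp (x^p - b^p) = Real.exp (-(b^p)) * Real.exp (x^p) := by
    rw [← Real.exp_add]; congr 1; ring
  calc x^2 = b^2 * (x/b)^2 := by field_simp
    _ ≤ b^2 * (Real.exp (-(b^p)) * Real.exp (x^p)) := by
        apply mul_le_mul_of_nonneg_left (h12 ▸ h11) (by positivity)
    _ = b^2 * Real.exp (-(b^p)) * Real.exp (x^p) := by ring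

lemma aux_sq_le {p x : ℝ} (hp : 1 ≤ p) (hx : 0 ≤ x) :
    x ^ 2 ≤ 4 * Real.exp (x ^ p) := by
  have he : (1:ℝ) ≤ Real.exp (x ^ p) := by
    rw [← Real.exp_zero]
    exact Real.exp_le_exp.2 (Real.rpow_nonneg hx p)
  rcases le_or_gt x 1 with h | h
  · nlinarith
  · have h1 : x ≤ x ^ p := by
      have := Real.rpow_le_rpow_of_exponent_le h.le hp
      simpa using this
    have h2 : Real.exp x ≤ Real.exp (x ^ p) := Real.exp_le_exp.2 h1
    have h3 : x/2 + 1 ≤ Real.exp (x/2) := Real.add_one_le_exp (x/2)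
    have h4 : Real.exp (x/2) ^ 2 = Real.exp x := by
      rw [sq, ← Real.exp_add]; ring_nf
    nlinarith [Real.exp_pos (x/2)]

lemma aux_aemeas {Ω : Type*} [MeasurableSpace Ω] {μ : Measure Ω} {Z : Ω → ℝ} {p s : ℝ}
    (hp : 0 < p) (hs : 0 < s)
    (h : AEStronglyMeasurable (fun ω => Real.exp ((|Z ω| / s) ^ p)) μ) :
    AEMeasurable (fun ω => |Z ω|) μ := by
  have h1 : AEMeasurable (fun ω => Real.exp ((|Z ω| / s) ^ p)) μ := h.aemeasurable
  have h2 : AEMeasurable (fun ω => (|Z ω| / s) ^ p) μ := by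
    have h' := Real.measurable_log.comp_aemeasurable h1
    simpa [Function.comp_def, Real.log_exp] using h'
  have h3 : AEMeasurable (fun ω => ((|Z ω| / s) ^ p) ^ p⁻¹) μ :=
    (Real.continuous_rpow_const (by positivity)).measurable.comp_aemeasurable h2
  have h4 : (fun ω => ((|Z ω| / s) ^ p) ^ p⁻¹) = fun ω => |Z ω| / s := by
    funext ω
    rw [← Real.rpow_mul (div_nonneg (abs_nonneg _) hs.le), mul_inv_cancel₀ hp.ne',
      Real.rpow_one]
  rw [h4] at h3
  have h5 : AEMeasurable (fun ω => (|Z ω| / s) * s) μ := h3.mul_const s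
  have h6 : (fun ω => (|Z ω| / s) * s) = fun ω => |Z ω| := by
    funext ω; field_simp
  rwa [h6] at h5

/-- If `‖Z‖_{ψ_p} = ν` for some `p ≥ 1` and `E[Z²] = σ² > 0`, then with
`c_{σ,p} := ν ⋅ max {5, [10 log(2ν²/σ²)]^{1/p}}`, one has
`E[Z² ⋅ 1(|Z| ≤ c_{σ,p})] ≥ E[Z²]/2`. -/
theorem stmt2 {Ω : Type*} [MeasurableSpace Ω] (μ : Measure Ω) [IsProbabilityMeasure μ]
    (p : ℝ) (hp : 1 ≤ p) (Z : Ω → ℝ)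
    (ν : ℝ) (hν : 0 < ν) (hnorm : orliczNorm p μ Z = ν)
    (σ2 : ℝ) (hσ2 : 0 < σ2) (hvar : ∫ ω, (Z ω) ^ 2 ∂μ = σ2) :
    (1 / 2) * ∫ ω, (Z ω) ^ 2 ∂μ ≤
      ∫ ω, (Z ω) ^ 2 *
        (if |Z ω| ≤ ν * max 5 ((10 * Real.log (2 * ν ^ 2 / σ2)) ^ (1 / p)) then (1 : ℝ) else 0) ∂μ := by
  have hp0 : 0 < p := lt_of_lt_of_le one_pos hp
  unfold orliczNorm at hnorm
  set S : Set ℝ := {t : ℝ | 0 < t ∧ ∫ ω, Real.exp ((|Z ω| / t) ^ p) ∂μ ≤ 2} with hSdef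
  have hS : sInf S = ν := hnorm
  have hbdd : BddBelow S := ⟨0, fun t ht => ht.1.le⟩
  have hne : S.Nonempty := by
    by_contra h
    rw [Set.not_nonempty_iff_eq_empty] at h
    rw [h, Real.sInf_empty] at hS
    exact absurd hS.symm hν.ne'
  set q : ℝ := ((100:ℝ)/99) ^ (1/p) with hqdef
  have hq1 : 1 < q :=
    (Real.one_lt_rpow_iff_of_pos (by norm_num)).2 (Or.inl ⟨by norm_num, by positivity⟩)
  obtain ⟨t, htS, htlt⟩ := Real.lt_sInf_add_pos hne (mul_pos hν (by linarith : (0:ℝ) < q - 1))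
  rw [hS] at htlt
  have ht0 : 0 < t := htS.1
  have hint2 : ∫ ω, Real.exp ((|Z ω| / t) ^ p) ∂μ ≤ 2 := htS.2
  have hνt : ν ≤ t := by
    have := csInf_le hbdd htS; rw [hS] at this; exact this
  have htq : t < ν * q := by nlinarith
  have htνq : t / ν < q := by rw [div_lt_iff₀ hν]; linarith
  have h100 : (t/ν) ^ p < 100/99 := by
    have h1 : (t/ν)^p < q^p := Real.rpow_lt_rpow (by positivity) htνq hp0
    have h2 : q ^ p = 100/99 := by
      rw [hqdef, ← Real.rpow_mul (by norm_num)]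
      rw [one_div, inv_mul_cancel₀ hp0.ne', Real.rpow_one]
    rw [h2] at h1; exact h1
  have hrp : (99:ℝ)/100 ≤ (ν/t) ^ p := by
    have heq : ν/t = (t/ν)⁻¹ := by rw [inv_div]
    rw [heq, Real.inv_rpow (by positivity)]
    have hpos : 0 < (t/ν)^p := Real.rpow_pos_of_pos (by positivity) p
    have h3 : ((100:ℝ)/99)⁻¹ ≤ ((t/ν)^p)⁻¹ := by
      apply inv_anti₀ hpos h100.le
    norm_num at h3
    linarith
  have hr : (99:ℝ)/100 ≤ ν/t := by
    have hr1 : ν/t ≤ 1 := (div_le_one ht0).2 hνt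
    have hr0 : 0 < ν/t := by positivity
    have h := Real.rpow_le_rpow_of_exponent_ge hr0 hr1 hp
    rw [Real.rpow_one] at h
    linarith
  -- the threshold
  set L := Real.log (2 * ν ^ 2 / σ2) with hLdef
  set a := max (5:ℝ) ((10 * L) ^ (1 / p)) with hadef
  have ha5 : (5:ℝ) ≤ a := le_max_left _ _
  have ha0 : (0:ℝ) < a := by linarith
  set c := ν * a with hcdef
  set b := a * (ν/t) with hbdef
  have hb4 : (4:ℝ) ≤ b := by
    nlinarith [mul_nonneg (by linarith : (0:ℝ) ≤ a - 5) (by linarith : (0:ℝ) ≤ ν/t - 99/100)]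
  have hbt : t * b = ν * a := by rw [hbdef]; field_simp
  have hap : (5:ℝ) ≤ a^p := by
    calc (5:ℝ) = 5^(1:ℝ) := (Real.rpow_one 5).symm
    _ ≤ (5:ℝ)^p := Real.rpow_le_rpow_of_exponent_le (by norm_num) hp
    _ ≤ a^p := Real.rpow_le_rpow (by norm_num) ha5 hp0.le
  have hapa : a ≤ a^p := by
    have h := Real.rpow_le_rpow_of_exponent_le (by linarith : (1:ℝ) ≤ a) hp
    rw [Real.rpow_one] at h; exact h
  have hapL : 10 * L ≤ a ^ p := by
    rcases le_or_gt (10*L) 0 with h | h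
    · linarith [Real.rpow_pos_of_pos ha0 p]
    · have h1 : (10*L)^(1/p) ≤ a := le_max_right _ _
      have h2 : ((10*L)^(1/p))^p ≤ a^p :=
        Real.rpow_le_rpow (Real.rpow_nonneg h.le _) h1 hp0.le
      rw [← Real.rpow_mul h.le, one_div, inv_mul_cancel₀ hp0.ne', Real.rpow_one] at h2
      exact h2
  have hbp : 99/100 * a^p ≤ b^p := by
    rw [hbdef, Real.mul_rpow ha0.le (by positivity)]
    have h := mul_le_mul_of_nonneg_left hrp (Real.rpow_nonneg ha0.le p)
    linarith
  have hlog50 : Real.log 2 + 2 * Real.log 5 < 4 := by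
    have h50 : Real.log 2 + 2*Real.log 5 = Real.log 50 := by
      rw [show (50:ℝ) = 2 * 5^2 by norm_num, Real.log_mul (by norm_num) (by norm_num),
        Real.log_pow]
      push_cast; ring
    rw [h50, Real.log_lt_iff_lt_exp (by norm_num)]
    calc (50:ℝ) < 2.7182818 ^ 4 := by norm_num
      _ ≤ Real.exp 1 ^ 4 := by
          gcongr <;> linarith [Real.exp_one_gt_d9]
      _ = Real.exp 4 := by rw [Real.exp_one_pow]; norm_num
  have hloga : Real.log a ≤ Real.log 5 + (a/5 - 1) := by
    have h1 : Real.log (a/5) ≤ a/5 - 1 := Real.log_le_sub_one_of_pos (by positivity)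
    rw [Real.log_div (ne_of_gt ha0) (by norm_num : (5:ℝ) ≠ 0)] at h1
    linarith
  have hkey : L + Real.log 2 + 2 * Real.log a ≤ b ^ p := by
    have h1 : L ≤ a^p / 10 := by linarith
    linarith [h1, hloga, hlog50, hapa, hbp, ha5]
  have ha2 : (0:ℝ) < a^2 := by positivity
  have hlogeq : Real.log (σ2 / (4*ν^2*a^2)) = -(L + Real.log 2 + 2*Real.log a) := by
    have hx : σ2/(4*ν^2*a^2) = ((2*ν^2/σ2) * (2*a^2))⁻¹ := by
      rw [show (2*ν^2/σ2) * (2*a^2) = (4*ν^2*a^2)/σ2 by ring, inv_div]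
    rw [hx, Real.log_inv, Real.log_mul (by positivity) (by positivity),
      Real.log_mul (two_ne_zero) (ne_of_gt ha2), Real.log_pow, hLdef]
    push_cast; ring
  have hexp : Real.exp (-(b^p)) ≤ σ2 / (4*ν^2*a^2) := by
    have hpos : 0 < σ2/(4*ν^2*a^2) := by positivity
    rw [← Real.exp_log hpos]
    apply Real.exp_le_exp.2
    rw [hlogeq]; linarith
  -- measurability and integrability
  have hZm : AEMeasurable (fun ω => |Z ω|) μ := by
    by_cases hex : ∃ s : ℝ, 0 < s ∧
        AEStronglyMeasurable (fun ω => Real.exp ((|Z ω|/s)^p)) μ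
    · obtain ⟨s, hs, hsm⟩ := hex
      exact aux_aemeas hp0 hs hsm
    · exfalso
      push_neg at hex
      have hsub : ∀ s : ℝ, 0 < s → s ∈ S := by
        intro s hs
        refine ⟨hs, ?_⟩
        have hni : ¬ Integrable (fun ω => Real.exp ((|Z ω|/s)^p)) μ :=
          fun hI => hex s hs hI.aestronglyMeasurable
        rw [integral_undef hni]; norm_num
      have h1 := csInf_le hbdd (hsub (ν/2) (by positivity))
      rw [hS] at h1
      linarith
  have hFm : ∀ s : ℝ, AEStronglyMeasurable (fun ω => Real.exp ((|Z ω|/s)^p)) μ := by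
    intro s
    have h1 : AEMeasurable (fun ω => |Z ω|/s) μ := hZm.div_const s
    have h2 : AEMeasurable (fun ω => (|Z ω|/s)^p) μ :=
      (Real.continuous_rpow_const hp0.le).measurable.comp_aemeasurable h1
    exact (Real.measurable_exp.comp_aemeasurable h2).aestronglyMeasurable
  have hIntF : Integrable (fun ω => Real.exp ((|Z ω|/t)^p)) μ := by
    by_contra hnI
    have hsub : ∀ s : ℝ, 0 < s → s ≤ t → s ∈ S := by
      intro s hs hst
      refine ⟨hs, ?_⟩
      have hns : ¬ Integrable (fun ω => Real.exp ((|Z ω|/s)^p)) μ := by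
        intro hI
        apply hnI
        apply Integrable.mono' hI (hFm t)
        filter_upwards with ω
        rw [Real.norm_eq_abs, abs_of_pos (Real.exp_pos _)]
        apply Real.exp_le_exp.2
        apply Real.rpow_le_rpow (by positivity) ?_ hp0.le
        gcongr
      rw [integral_undef hns]; norm_num
    have h1 := csInf_le hbdd (hsub (min t (ν/2)) (lt_min ht0 (by positivity)) (min_le_left _ _))
    rw [hS] at h1
    have h2 : min t (ν/2) ≤ ν/2 := min_le_right _ _
    linarith
  have hZ2m : AEStronglyMeasurable (fun ω => (Z ω)^2) μ := by
    have h1 : AEMeasurable (fun ω => |Z ω|^2) μ := hZm.pow_const 2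
    have heq : (fun ω => |Z ω|^2) = fun ω => (Z ω)^2 := by
      funext ω; rw [sq_abs]
    rw [heq] at h1; exact h1.aestronglyMeasurable
  have hIntZ2 : Integrable (fun ω => (Z ω)^2) μ := by
    apply Integrable.mono' (hIntF.const_mul (4*t^2)) hZ2m
    filter_upwards with ω
    rw [Real.norm_eq_abs, abs_of_nonneg (sq_nonneg _)]
    have hx : (Z ω)^2 = t^2 * (|Z ω|/t)^2 := by
      rw [div_pow, sq_abs]; field_simp
    have h1 := aux_sq_le hp (show (0:ℝ) ≤ |Z ω|/t by positivity)
    have h2 := mul_le_mul_of_nonneg_left h1 (sq_nonneg t)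
    rw [hx]; linarith [h2]
  -- the two pieces
  set f1 : Ω → ℝ := fun ω => (Z ω)^2 * (if |Z ω| ≤ c then (1:ℝ) else 0) with hf1def
  set f2 : Ω → ℝ := fun ω => (Z ω)^2 * (if |Z ω| ≤ c then (0:ℝ) else 1) with hf2def
  obtain ⟨W, hWm, hWe⟩ := hZm
  obtain ⟨V, hVm, hVe⟩ := hZ2m
  have hf1m : AEStronglyMeasurable f1 μ := by
    have hg : Measurable (fun ω => V ω * (if W ω ≤ c then (1:ℝ) else 0)) :=
      hVm.measurable.mul (Measurable.ite (measurableSet_le hWm measurable_const)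
        measurable_const measurable_const)
    apply hg.aestronglyMeasurable.congr
    filter_upwards [hWe, hVe] with ω h1 h2
    rw [hf1def]
    simp only
    rw [← h1, ← h2]
  have hf2m : AEStronglyMeasurable f2 μ := by
    have hg : Measurable (fun ω => V ω * (if W ω ≤ c then (0:ℝ) else 1)) :=
      hVm.measurable.mul (Measurable.ite (measurableSet_le hWm measurable_const)
        measurable_const measurable_const)
    apply hg.aestronglyMeasurable.congr
    filter_upwards [hWe, hVe] with ω h1 h2
    rw [hf2def]
    simp only
    rw [← h1, ← h2]
  have hIntf1 : Integrable f1 μ := by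
    apply Integrable.mono' hIntZ2 hf1m
    filter_upwards with ω
    rw [hf1def]
    simp only [Real.norm_eq_abs]
    split_ifs <;> simp [abs_of_nonneg (sq_nonneg (Z ω)), sq_nonneg]
  have hIntf2 : Integrable f2 μ := by
    apply Integrable.mono' hIntZ2 hf2m
    filter_upwards with ω
    rw [hf2def]
    simp only [Real.norm_eq_abs]
    split_ifs <;> simp [abs_of_nonneg (sq_nonneg (Z ω)), sq_nonneg]
  have hsplit : ∫ ω, (Z ω)^2 ∂μ = (∫ ω, f1 ω ∂μ) + ∫ ω, f2 ω ∂μ := by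
    rw [← integral_add hIntf1 hIntf2]
    congr 1; funext ω
    rw [hf1def, hf2def]
    simp only
    split_ifs <;> ring
  set K := t^2 * (b^2 * Real.exp (-(b^p))) with hKdef
  have hK0 : (0:ℝ) ≤ K := by positivity
  have hptw : ∀ ω, f2 ω ≤ K * Real.exp ((|Z ω|/t)^p) := by
    intro ω
    rw [hf2def]
    simp only
    split_ifs with h
    · rw [mul_zero]
      exact mul_nonneg hK0 (Real.exp_pos _).le
    · push_neg at h
      have hbx : b ≤ |Z ω|/t := by
        rw [le_div_iff₀ ht0]
        calc b * t = ν * a := by rw [mul_comm]; exact hbt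
        _ ≤ |Z ω| := le_of_lt h
      have hd := aux_decay hp hb4 hbx
      have hx : (Z ω)^2 = t^2 * (|Z ω|/t)^2 := by
        rw [div_pow, sq_abs]; field_simp
      rw [mul_one, hx, hKdef]
      calc t^2 * (|Z ω|/t)^2
          ≤ t^2 * (b^2 * Real.exp (-(b^p)) * Real.exp ((|Z ω|/t)^p)) := by
            apply mul_le_mul_of_nonneg_left hd (sq_nonneg t)
        _ = t^2 * (b^2 * Real.exp (-(b^p))) * Real.exp ((|Z ω|/t)^p) := by ring
  have htail : ∫ ω, f2 ω ∂μ ≤ σ2/2 := by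
    have h1 : ∫ ω, f2 ω ∂μ ≤ ∫ ω, K * Real.exp ((|Z ω|/t)^p) ∂μ :=
      integral_mono hIntf2 (hIntF.const_mul K) hptw
    rw [integral_const_mul] at h1
    have h2 : K * ∫ ω, Real.exp ((|Z ω|/t)^p) ∂μ ≤ K * 2 :=
      mul_le_mul_of_nonneg_left hint2 hK0
    have h4 : K * 2 = 2 * (ν*a)^2 * Real.exp (-(b^p)) := by
      rw [hKdef, ← hbt]; ring
    have h5 : 2*(ν*a)^2 * Real.exp (-(b^p)) ≤ 2*(ν*a)^2 * (σ2/(4*ν^2*a^2)) :=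
      mul_le_mul_of_nonneg_left hexp (by positivity)
    have h6 : 2*(ν*a)^2 * (σ2/(4*ν^2*a^2)) = σ2/2 := by
      field_simp; ring
    linarith
  linarith [hsplit, htail, hvar]
end

section
/- Let $U, V$ be independent $\mathcal{N}(0, I_d)$ vectors and ${\bf B} \in \mathbb{R}^{d\times d}$ with largest singular value $D_{11}$ and $t > 0$ such that $D_{11}^2/t^2 \le 3/4$. Then $\exp(\|{\bf B}\|_F^2/(2t^2)) \le \mathbb{E}[\exp(U^\top {\bf B} V / t)] \le \exp(\|{\bf B}\|_F^2/t^2)$. -/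
open MeasureTheory ProbabilityTheory Real Matrix

/-!
Integrating out `U` coordinatewise with the Gaussian MGF turns `E[exp(Uᵀ B V / t)]` into
`E[exp(|B V|² / (2t²))]`. Rotating `V` into an orthonormal eigenbasis of `BᵀB`, which leaves the
standard Gaussian invariant, splits this into one-dimensional integrals
`E[exp(sᵢ X² / 2)] = (1 - sᵢ)^(-1/2)` with `sᵢ = Dᵢᵢ² / t²`. Both bounds then follow from
`exp(s/2) ≤ (1 - s)^(-1/2) ≤ exp s` on `[0, 3/4]`, since `∑ sᵢ = ‖B‖_F² / t²` is the trace of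
`BᵀB / t²`.
-/

lemma integral_exp_mul_gaussianReal (c : ℝ) :
    ∫ x, exp (c * x) ∂gaussianReal 0 1 = exp (c ^ 2 / 2) := by
  simpa [mgf] using congrFun (mgf_fun_id_gaussianReal (μ := 0) (v := 1)) c

lemma integral_exp_mul_sq_div_two_gaussianReal {s : ℝ} (hs : s < 1) :
    ∫ x, exp (s * x ^ 2 / 2) ∂gaussianReal 0 1 = (√(1 - s))⁻¹ := by
  have h1s : 0 < 1 - s := by linarith
  have hpdf (x : ℝ) : gaussianPDFReal 0 1 x • exp (s * x ^ 2 / 2)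
      = (√(2 * π))⁻¹ * exp (-((1 - s) / 2) * x ^ 2) := by
    simp only [gaussianPDFReal, NNReal.coe_one, mul_one, sub_zero, smul_eq_mul, mul_assoc,
      ← exp_add]
    ring_nf
  simp_rw [integral_gaussianReal_eq_integral_smul one_ne_zero, hpdf, integral_const_mul,
    integral_gaussian]
  rw [div_div_eq_mul_div, sqrt_div' _ h1s.le, sqrt_mul' _ zero_le_two, sqrt_mul' _ pi_pos.le]
  field_simp

lemma exp_half_le_inv_sqrt_one_sub {s : ℝ} (hs : s < 1) : exp (s / 2) ≤ (√(1 - s))⁻¹ := by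
  rw [← inv_inv (exp _), ← exp_neg, ← neg_div, exp_half]
  gcongr
  exact one_sub_le_exp_neg s

lemma inv_sqrt_one_sub_le_exp {s : ℝ} (h0 : 0 ≤ s) (h1 : s ≤ 3 / 4) : (√(1 - s))⁻¹ ≤ exp s := by
  have hcubic : 1 + 2 * s + (2 * s) ^ 2 / 2 + (2 * s) ^ 3 / 6 ≤ exp (2 * s) := by
    simpa [Finset.sum_range_succ, Nat.factorial] using
      sum_le_exp_of_nonneg (by positivity : 0 ≤ 2 * s) 4
  have hsq : exp (-(2 * s)) ≤ 1 - s := by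
    rw [exp_neg, inv_le_iff_one_le_mul₀ (exp_pos _)]
    nlinarith [pow_nonneg h0 3, pow_nonneg h0 4]
  rw [← inv_inv (exp s), ← exp_neg, show -s = -(2 * s) / 2 by ring, exp_half]
  gcongr

section GaussianVector

variable {ι : Type*} [Fintype ι]

lemma integral_exp_dotProduct_pi_gaussianReal (w : ι → ℝ) :
    ∫ u, exp (u ⬝ᵥ w) ∂(Measure.pi fun _ : ι => gaussianReal 0 1) = exp (w ⬝ᵥ w / 2) := by
  have hprod (u : ι → ℝ) : exp (u ⬝ᵥ w) = ∏ i, exp (w i * u i) := by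
    simp_rw [dotProduct, exp_sum, mul_comm]
  simp_rw [hprod]
  rw [integral_fintype_prod_eq_prod (fun i x => exp (w i * x))]
  simp_rw [integral_exp_mul_gaussianReal, ← exp_sum, dotProduct, Finset.sum_div, sq]

lemma map_pi_gaussianReal_orthonormalBasis (b : OrthonormalBasis ι ℝ (EuclideanSpace ℝ ι)) :
    (Measure.pi fun _ : ι => gaussianReal 0 1).map (fun x => WithLp.ofLp (∑ i, x i • b i)) =
      Measure.pi fun _ : ι => gaussianReal 0 1 := by
  have h := congrArg (Measure.map WithLp.ofLp)
    ((stdGaussian_eq_map_pi_orthonormalBasis b).symm.trans (map_pi_eq_stdGaussian).symm)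
  rwa [Measure.map_map (by fun_prop) (by fun_prop), Measure.map_map (by fun_prop) (by fun_prop),
    Function.comp_def, Function.comp_def, Measure.map_id'] at h

lemma Matrix.IsHermitian.dotProduct_mulVec_sum_smul_eigenvectorBasis [DecidableEq ι]
    {A : Matrix ι ι ℝ} (hA : A.IsHermitian) (x : ι → ℝ) :
    WithLp.ofLp (∑ i, x i • hA.eigenvectorBasis i) ⬝ᵥ
        (A *ᵥ WithLp.ofLp (∑ i, x i • hA.eigenvectorBasis i)) =
      ∑ i, hA.eigenvalues i * x i ^ 2 := by
  have horth (i j : ι) :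
      WithLp.ofLp (hA.eigenvectorBasis j) ⬝ᵥ WithLp.ofLp (hA.eigenvectorBasis i) =
        if i = j then 1 else 0 := by
    rw [← star_trivial (WithLp.ofLp (hA.eigenvectorBasis i)),
      ← EuclideanSpace.inner_eq_star_dotProduct, OrthonormalBasis.inner_eq_ite]
  simp only [WithLp.ofLp_sum, WithLp.ofLp_smul, mulVec_sum, mulVec_smul,
    hA.mulVec_eigenvectorBasis, sum_dotProduct, dotProduct_sum, smul_dotProduct, dotProduct_smul,
    horth, smul_eq_mul, mul_ite, mul_one, mul_zero, Finset.sum_ite_eq, Finset.mem_univ, if_true]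
  exact Finset.sum_congr rfl fun i _ => by ring

lemma integral_exp_mul_dotProduct_mulVec_pi_gaussianReal [DecidableEq ι] {A : Matrix ι ι ℝ}
    (hA : A.IsHermitian) {c : ℝ} (hc : ∀ i, c * hA.eigenvalues i < 1) :
    ∫ v, exp (c * (v ⬝ᵥ (A *ᵥ v)) / 2) ∂(Measure.pi fun _ : ι => gaussianReal 0 1) =
      ∏ i, (√(1 - c * hA.eigenvalues i))⁻¹ := by
  rw [← map_pi_gaussianReal_orthonormalBasis hA.eigenvectorBasis,
    integral_map (by fun_prop : Continuous _).aemeasurable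
      (by fun_prop : Continuous _).aestronglyMeasurable]
  simp_rw [hA.dotProduct_mulVec_sum_smul_eigenvectorBasis, Finset.mul_sum, Finset.sum_div, exp_sum,
    ← mul_assoc]
  rw [integral_fintype_prod_eq_prod (fun i x => exp (c * hA.eigenvalues i * x ^ 2 / 2))]
  exact Finset.prod_congr rfl fun i _ => integral_exp_mul_sq_div_two_gaussianReal (hc i)

end GaussianVector

section BilinearForm

variable {m n : Type*} [Fintype m] [Fintype n] [DecidableEq n]

lemma sum_eigenvalues_conjTranspose_mul_self (B : Matrix m n ℝ) :
    ∑ i, (isHermitian_conjTranspose_mul_self B).eigenvalues i = ∑ i, ∑ j, B i j ^ 2 := by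
  have := (isHermitian_conjTranspose_mul_self B).trace_eq_sum_eigenvalues
  simp only [RCLike.ofReal_real_eq_id, id] at this
  rw [← this, trace, Finset.sum_comm]
  simp [mul_apply, sq]

lemma integral_exp_mul_dotProduct_mulVec_prod_pi_gaussianReal (B : Matrix m n ℝ) {c : ℝ}
    (hc : ∀ i, c ^ 2 * (isHermitian_conjTranspose_mul_self B).eigenvalues i < 1) :
    ∫ p : (m → ℝ) × (n → ℝ), exp (c * (p.1 ⬝ᵥ (B *ᵥ p.2)))
        ∂((Measure.pi fun _ => gaussianReal 0 1).prod (Measure.pi fun _ => gaussianReal 0 1)) =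
      ∏ i, (√(1 - c ^ 2 * (isHermitian_conjTranspose_mul_self B).eigenvalues i))⁻¹ := by
  have hinner (v : n → ℝ) :
      ∫ u, exp (c * (u ⬝ᵥ (B *ᵥ v))) ∂(Measure.pi fun _ : m => gaussianReal 0 1) =
        exp (c ^ 2 * (v ⬝ᵥ ((Bᴴ * B) *ᵥ v)) / 2) := by
    have hquad : (B *ᵥ v) ⬝ᵥ (B *ᵥ v) = v ⬝ᵥ ((Bᴴ * B) *ᵥ v) := by
      rw [conjTranspose_eq_transpose_of_trivial, ← mulVec_mulVec, dotProduct_mulVec v,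
        vecMul_transpose]
    simp_rw [← smul_eq_mul c, ← dotProduct_smul, integral_exp_dotProduct_pi_gaussianReal,
      smul_dotProduct, dotProduct_smul, hquad, smul_eq_mul, ← mul_assoc, sq]
  have hG : Integrable (fun v => exp (c ^ 2 * (v ⬝ᵥ ((Bᴴ * B) *ᵥ v)) / 2))
      (Measure.pi fun _ : n => gaussianReal 0 1) := by
    -- that integral was evaluated without assuming integrability, so its nonzero value certifies it
    refine Integrable.of_integral_ne_zero ?_
    rw [integral_exp_mul_dotProduct_mulVec_pi_gaussianReal _ hc]
    exact (Finset.prod_pos fun i _ => inv_pos.2 (sqrt_pos.2 (sub_pos.2 (hc i)))).ne'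
  have hF : Integrable (fun p : (m → ℝ) × (n → ℝ) => exp (c * (p.1 ⬝ᵥ (B *ᵥ p.2))))
      ((Measure.pi fun _ => gaussianReal 0 1).prod (Measure.pi fun _ => gaussianReal 0 1)) := by
    refine (integrable_prod_iff' (Continuous.aestronglyMeasurable (by fun_prop))).2
      ⟨ae_of_all _ fun v => Integrable.of_integral_ne_zero ?_, ?_⟩
    · rw [hinner]
      exact (exp_pos _).ne'
    · simpa only [Real.norm_eq_abs, abs_exp, hinner] using hG
  rw [integral_prod_symm _ hF]
  simp_rw [hinner]
  exact integral_exp_mul_dotProduct_mulVec_pi_gaussianReal _ hc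

end BilinearForm

theorem stmt10_general (d : ℕ) (B : Matrix (Fin d) (Fin d) ℝ) (t : ℝ)
    (hsv : ∀ i, (Matrix.isHermitian_conjTranspose_mul_self B).eigenvalues i / t ^ 2 ≤ 3 / 4) :
    Real.exp ((∑ i, ∑ j, (B i j) ^ 2) / (2 * t ^ 2)) ≤
      (∫ p : (Fin d → ℝ) × (Fin d → ℝ), Real.exp (p.1 ⬝ᵥ (B *ᵥ p.2) / t)
        ∂((Measure.pi fun _ : Fin d => gaussianReal 0 1).prod
          (Measure.pi fun _ : Fin d => gaussianReal 0 1))) ∧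
    (∫ p : (Fin d → ℝ) × (Fin d → ℝ), Real.exp (p.1 ⬝ᵥ (B *ᵥ p.2) / t)
        ∂((Measure.pi fun _ : Fin d => gaussianReal 0 1).prod
          (Measure.pi fun _ : Fin d => gaussianReal 0 1))) ≤
      Real.exp ((∑ i, ∑ j, (B i j) ^ 2) / t ^ 2) := by
  set s := fun i => (isHermitian_conjTranspose_mul_self B).eigenvalues i / t ^ 2
  have hs0 (i : Fin d) : 0 ≤ s i :=
    div_nonneg (eigenvalues_conjTranspose_mul_self_nonneg B i) (sq_nonneg t)
  have hmgf : ∫ p : (Fin d → ℝ) × (Fin d → ℝ), exp (p.1 ⬝ᵥ (B *ᵥ p.2) / t)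
      ∂((Measure.pi fun _ => gaussianReal 0 1).prod (Measure.pi fun _ => gaussianReal 0 1)) =
        ∏ i, (√(1 - s i))⁻¹ := by
    have hc (i : Fin d) :
        t⁻¹ ^ 2 * (isHermitian_conjTranspose_mul_self B).eigenvalues i = s i := by
      rw [inv_pow, inv_mul_eq_div]
    simp_rw [div_eq_inv_mul _ t, ← hc]
    exact integral_exp_mul_dotProduct_mulVec_prod_pi_gaussianReal B
      fun i => (hc i).trans_lt (by linarith [hsv i])
  have hfrob : (∑ i, ∑ j, B i j ^ 2) / t ^ 2 = ∑ i, s i := by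
    rw [← sum_eigenvalues_conjTranspose_mul_self, Finset.sum_div]
  rw [hmgf, div_mul_eq_div_div_swap, hfrob, Finset.sum_div]
  constructor
  · rw [exp_sum]
    exact Finset.prod_le_prod (fun _ _ => (exp_pos _).le)
      fun i _ => exp_half_le_inv_sqrt_one_sub (by linarith [hsv i])
  · rw [exp_sum]
    exact Finset.prod_le_prod (fun _ _ => inv_nonneg.2 (sqrt_nonneg _))
      fun i _ => inv_sqrt_one_sub_le_exp (hs0 i) (hsv i)

/-- For `U, V` independent `N(0, I_d)` vectors and `B ∈ ℝ^{d×d}` whose largest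
singular value `D₁₁` satisfies `D₁₁²/t² ≤ 3/4` (equivalently every squared singular
value, i.e. every eigenvalue of `BᴴB`, is `≤ (3/4) t²`), one has
`exp(‖B‖_F²/(2t²)) ≤ E[exp(Uᵀ B V / t)] ≤ exp(‖B‖_F²/t²)`. -/
theorem stmt10 (d : ℕ) (B : Matrix (Fin d) (Fin d) ℝ) (t : ℝ) (ht : 0 < t)
    (hsv : ∀ i, (Matrix.isHermitian_conjTranspose_mul_self B).eigenvalues i / t ^ 2 ≤ 3 / 4) :
    Real.exp ((∑ i, ∑ j, (B i j) ^ 2) / (2 * t ^ 2)) ≤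
      (∫ p : (Fin d → ℝ) × (Fin d → ℝ), Real.exp (p.1 ⬝ᵥ (B *ᵥ p.2) / t)
        ∂((Measure.pi fun _ : Fin d => gaussianReal 0 1).prod
          (Measure.pi fun _ : Fin d => gaussianReal 0 1))) ∧
    (∫ p : (Fin d → ℝ) × (Fin d → ℝ), Real.exp (p.1 ⬝ᵥ (B *ᵥ p.2) / t)
        ∂((Measure.pi fun _ : Fin d => gaussianReal 0 1).prod
          (Measure.pi fun _ : Fin d => gaussianReal 0 1))) ≤
      Real.exp ((∑ i, ∑ j, (B i j) ^ 2) / t ^ 2) :=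
  stmt10_general d B t hsv
end
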